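/- arXiv:1106.0833 — 5 statements merged into one kernel-verified Lean document; each statement's English description precedes it below -/
import Mathlib

section
/- For every strategy (x, a) there exists a door x' such that the always-switching strategy based at x' weakly dominates (x, a): for every winning door θ in D and every host function d admissible for θ, the payoff of (x', switch) at θ is at least the payoff of (x, a) at θ under d. In particular, the class of always-switching strategies is weakly dominant in the Monty Hall problem. -/
/-- Doors form a finite type `D`. A host function `d` is admissible for the
winning door `θ` if `d x = θ` whenever `x ≠ θ`, and `d θ ≠ θ`. -/
def Admissible {D : Type*} [DecidableEq D] (θ : D) (d : D → D) : Prop :=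
  (∀ x, x ≠ θ → d x = θ) ∧ d θ ≠ θ

/-- Payoff of an action (`true` = switch, `false` = match) at chosen door `x`
when the winning door is `θ`. -/
def payoff {D : Type*} [DecidableEq D] (θ x : D) (act : Bool) : ℝ :=
  if act then (if x ≠ θ then 1 else 0) else (if x = θ then 1 else 0)

/-- Payoff of the strategy `(x, a)` against winning door `θ` and host function `d`. -/
def stratPayoff {D : Type*} [DecidableEq D] (θ x : D) (a : D → Bool) (d : D → D) : ℝ :=
  payoff θ x (a (d x))

/-! An admissible host never opens the chosen door, so a strategy is only ever asked for its action
at doors other than `x`. If it switches at all of them it *is* always-switching at `x`. Otherwise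
it matches at some `y ≠ x`, and always-switching at `y` dominates it: that loses only when `y` is
the winning door, and then the host opens `y` for a player at `x`, who matches and loses too. -/

lemma payoff_le_one {D : Type*} [DecidableEq D] (θ x : D) (act : Bool) :
    payoff θ x act ≤ 1 := by
  unfold payoff; split_ifs <;> norm_num

lemma payoff_nonneg {D : Type*} [DecidableEq D] (θ x : D) (act : Bool) :
    0 ≤ payoff θ x act := by
  unfold payoff; split_ifs <;> norm_num

namespace Admissible

variable {D : Type*} [DecidableEq D] {θ : D} {d : D → D}

lemma apply_ne_self (hd : Admissible θ d) (x : D) : d x ≠ x := by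
  by_cases hx : x = θ
  · exact hx ▸ hd.2
  · rw [hd.1 x hx]
    exact Ne.symm hx

lemma stratPayoff_eq_alwaysSwitch (hd : Admissible θ d) {x : D} {a : D → Bool}
    (ha : ∀ y, y ≠ x → a y = true) :
    stratPayoff θ x a d = stratPayoff θ x (fun _ => true) d := by
  simp only [stratPayoff, ha (d x) (hd.apply_ne_self x)]

lemma stratPayoff_eq_zero_of_match (hd : Admissible θ d) {x : D} {a : D → Bool}
    (hxθ : x ≠ θ) (ha : a θ = false) : stratPayoff θ x a d = 0 := by
  simp [stratPayoff, payoff, hd.1 x hxθ, ha, hxθ]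

end Admissible

lemma stratPayoff_alwaysSwitch_of_ne {D : Type*} [DecidableEq D] {θ x : D} (hxθ : x ≠ θ)
    (d : D → D) : stratPayoff θ x (fun _ => true) d = 1 := by
  simp [stratPayoff, payoff, hxθ]

lemma stratPayoff_le_alwaysSwitch_of_match {D : Type*} [DecidableEq D] {θ x y : D}
    {a : D → Bool} {d : D → D} (hd : Admissible θ d) (hxy : x ≠ y) (ha : a y = false) :
    stratPayoff θ x a d ≤ stratPayoff θ y (fun _ => true) d := by
  by_cases hyθ : y = θ
  · subst hyθ
    rw [hd.stratPayoff_eq_zero_of_match hxy ha]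
    exact payoff_nonneg _ _ _
  · rw [stratPayoff_alwaysSwitch_of_ne hyθ]
    exact payoff_le_one _ _ _

theorem always_switching_weakly_dominant_general {D : Type*} [DecidableEq D]
    (x : D) (a : D → Bool) :
    ∃ x' : D, ∀ θ : D, ∀ d : D → D, Admissible θ d →
      stratPayoff θ x a d ≤ stratPayoff θ x' (fun _ => true) d := by
  by_cases h : ∃ y, y ≠ x ∧ a y = false
  · obtain ⟨y, hyx, hay⟩ := h
    exact ⟨y, fun θ d hd => stratPayoff_le_alwaysSwitch_of_match hd (Ne.symm hyx) hay⟩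
  · have ha : ∀ y, y ≠ x → a y = true := by simpa using h
    exact ⟨x, fun θ d hd => (hd.stratPayoff_eq_alwaysSwitch ha).le⟩

/-- For every strategy `(x, a)` there is a door `x'` such that the
always-switching strategy based at `x'` weakly dominates `(x, a)`. -/
theorem always_switching_weakly_dominant {D : Type*} [Fintype D] [DecidableEq D]
    (hD : 3 ≤ Fintype.card D) (x : D) (a : D → Bool) :
    ∃ x' : D, ∀ θ : D, ∀ d : D → D, Admissible θ d →
      stratPayoff θ x a d ≤ stratPayoff θ x' (fun _ => true) d :=
  always_switching_weakly_dominant_general x a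
end

section
/- In the Bayesian setting with prior p on the winning door and arbitrary transition probabilities q, the probability of winning with the always-switching strategy based at door x equals 1 - p x, regardless of q. -/
open Finset

/-- `p` is a prior on the doors. -/
def IsPrior {D : Type*} [Fintype D] (p : D → ℝ) : Prop :=
  (∀ θ, 0 ≤ p θ) ∧ ∑ θ, p θ = 1

/-- `q` are transition probabilities for the revealed door. -/
def IsTransKernel {D : Type*} [Fintype D] (q : D → D → ℝ) : Prop :=
  (∀ θ y, 0 ≤ q θ y) ∧ (∀ θ, q θ θ = 0) ∧ (∀ θ, ∑ y, q θ y = 1)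

/-- Expected winning probability of strategy `(x, a)` (`true` = switch,
`false` = match) under prior `p` and transition probabilities `q`. -/
def ExpWin {D : Type*} [Fintype D] [DecidableEq D]
    (x : D) (a : D → Bool) (p : D → ℝ) (q : D → D → ℝ) : ℝ :=
  p x * ∑ y ∈ Finset.univ.filter (· ≠ x), q x y * (if a y = false then 1 else 0)
    + ∑ θ ∈ Finset.univ.filter (· ≠ x), p θ * (if a θ = true then 1 else 0)

theorem expWin_switch_eq_sum_erase {D : Type*} [Fintype D] [DecidableEq D]
    (x : D) (p : D → ℝ) (q : D → D → ℝ) :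
    ExpWin x (fun _ => true) p q = ∑ θ ∈ univ.erase x, p θ := by
  simp [ExpWin, filter_ne']

theorem IsPrior.sum_erase {D : Type*} [Fintype D] [DecidableEq D] {p : D → ℝ}
    (hp : IsPrior p) (x : D) : ∑ θ ∈ univ.erase x, p θ = 1 - p x := by
  rw [sum_erase_eq_sub (mem_univ x), hp.2]

theorem expWin_always_switching_general {D : Type*} [Fintype D] [DecidableEq D]
    (p : D → ℝ) (hp : IsPrior p)
    (q : D → D → ℝ) (x : D) :
    ExpWin x (fun _ => true) p q = 1 - p x := by
  rw [expWin_switch_eq_sum_erase, hp.sum_erase]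

/-- The winning probability of the always-switching strategy
based at `x` equals `1 - p x`, regardless of `q`. -/
theorem expWin_always_switching {D : Type*} [Fintype D] [DecidableEq D]
    (hD : 3 ≤ Fintype.card D) (p : D → ℝ) (hp : IsPrior p)
    (q : D → D → ℝ) (hq : IsTransKernel q) (x : D) :
    ExpWin x (fun _ => true) p q = 1 - p x :=
  expWin_always_switching_general p hp q x
end

section
/- In the Bayesian setting with prior p and transition probabilities q, every strategy (x, a) satisfies ExpWin(x, a, p, q) ≤ 1 - min_{θ ∈ D} p θ, and the always-switching strategy based at any door θ* minimizing p attains this bound: ExpWin(θ*, switch, p, q) = 1 - p θ*. Hence the always-switching strategy based at a minimizer of the prior is Bayes-optimal. -/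
/-!
If the player ever matches, say at the door `y₀ ≠ x`, then the first summand of `ExpWin` is
at most `p x` and the second at most the prior mass off `{x, y₀}`, so `ExpWin ≤ 1 - p y₀`.
If the player always switches, `ExpWin = 1 - p x`. Either way `ExpWin ≤ 1 - p θ` for some door
`θ`, hence `ExpWin ≤ 1 - min p`, and always switching from a minimizer attains this.
-/

open Finset

lemma sum_le_one_of_sum_univ_eq_one {ι : Type*} [Fintype ι] {f : ι → ℝ} (hf : ∀ i, 0 ≤ f i)
    (h1 : ∑ i, f i = 1) (s : Finset ι) : ∑ i ∈ s, f i ≤ 1 :=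
  h1 ▸ sum_le_univ_sum_of_nonneg hf

section ExpWin

variable {D : Type*} [Fintype D] [DecidableEq D]

lemma expWin_eq_sum_filter (x : D) (a : D → Bool) (p : D → ℝ) (q : D → D → ℝ) :
    ExpWin x a p q = p x * ∑ y ∈ univ.filter (fun y => y ≠ x ∧ a y = false), q x y
      + ∑ θ ∈ univ.filter (fun θ => θ ≠ x ∧ a θ = true), p θ := by
  simp only [ExpWin, mul_ite, mul_one, mul_zero, ← sum_filter, filter_filter]

lemma sum_erase_eq_one_sub {p : D → ℝ} (hp : ∑ θ, p θ = 1) (x : D) :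
    ∑ θ ∈ univ.erase x, p θ = 1 - p x := by
  rw [sum_erase_eq_sub (mem_univ x), hp]

lemma expWin_switch {p : D → ℝ} (hp : ∑ θ, p θ = 1) (x : D) (q : D → D → ℝ) :
    ExpWin x (fun _ => true) p q = 1 - p x := by
  simp [expWin_eq_sum_filter, ← sum_erase_eq_one_sub hp x, filter_ne']

lemma expWin_le_of_forall_switch {p : D → ℝ} (hp : IsPrior p) (x : D) (a : D → Bool)
    (q : D → D → ℝ) (ha : ∀ y, y ≠ x → a y = true) :
    ExpWin x a p q ≤ 1 - p x := by
  have hmatch : univ.filter (fun y => y ≠ x ∧ a y = false) = ∅ :=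
    filter_eq_empty_iff.2 fun y _ ⟨hyx, hy⟩ => by simp [ha y hyx] at hy
  rw [expWin_eq_sum_filter, hmatch, sum_empty, mul_zero, zero_add,
    ← sum_erase_eq_one_sub hp.2 x]
  exact sum_le_sum_of_subset_of_nonneg (fun θ hθ => by simp_all) fun θ _ _ => hp.1 θ

lemma expWin_le_of_match {p : D → ℝ} (hp : IsPrior p) {q : D → D → ℝ} (hq : IsTransKernel q)
    (x : D) (a : D → Bool) {y₀ : D} (hy₀x : y₀ ≠ x) (hy₀ : a y₀ = false) :
    ExpWin x a p q ≤ 1 - p y₀ := by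
  have hmatch : p x * ∑ y ∈ univ.filter (fun y => y ≠ x ∧ a y = false), q x y ≤ p x :=
    mul_le_of_le_one_right (hp.1 x) (sum_le_one_of_sum_univ_eq_one (hq.1 x) (hq.2.2 x) _)
  have hswitch : ∑ θ ∈ univ.filter (fun θ => θ ≠ x ∧ a θ = true), p θ ≤ 1 - p x - p y₀ := by
    calc ∑ θ ∈ univ.filter (fun θ => θ ≠ x ∧ a θ = true), p θ
        ≤ ∑ θ ∈ (univ.erase x).erase y₀, p θ :=
          sum_le_sum_of_subset_of_nonneg (fun θ _ => by grind) fun θ _ _ => hp.1 θ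
      _ = 1 - p x - p y₀ := by
          rw [sum_erase_eq_sub (mem_erase.2 ⟨hy₀x, mem_univ y₀⟩), sum_erase_eq_one_sub hp.2]
  rw [expWin_eq_sum_filter]
  linarith

lemma exists_expWin_le {p : D → ℝ} (hp : IsPrior p) {q : D → D → ℝ} (hq : IsTransKernel q)
    (x : D) (a : D → Bool) : ∃ θ, ExpWin x a p q ≤ 1 - p θ := by
  by_cases ha : ∀ y, y ≠ x → a y = true
  · exact ⟨x, expWin_le_of_forall_switch hp x a q ha⟩
  · push Not at ha
    obtain ⟨y₀, hy₀x, hy₀⟩ := ha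
    exact ⟨y₀, expWin_le_of_match hp hq x a hy₀x (by simpa using hy₀)⟩

end ExpWin

theorem bayes_optimality_of_switching_general {D : Type*} [Fintype D] [DecidableEq D]
    (p : D → ℝ) (hp : IsPrior p)
    (q : D → D → ℝ) (hq : IsTransKernel q)
    (θstar : D) (hθstar : ∀ θ : D, p θstar ≤ p θ) :
    (∀ (x : D) (a : D → Bool), ExpWin x a p q ≤ 1 - p θstar) ∧
    ExpWin θstar (fun _ => true) p q = 1 - p θstar := by
  refine ⟨fun x a => ?_, expWin_switch hp.2 θstar q⟩
  obtain ⟨θ, hθ⟩ := exists_expWin_le hp hq x a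
  linarith [hθstar θ]

/-- Every strategy has winning probability at most
`1 - min p`, and the always-switching strategy based at a minimizer `θ*`
of the prior attains this bound; hence it is Bayes-optimal. -/
theorem bayes_optimality_of_switching {D : Type*} [Fintype D] [DecidableEq D]
    (hD : 3 ≤ Fintype.card D) (p : D → ℝ) (hp : IsPrior p)
    (q : D → D → ℝ) (hq : IsTransKernel q)
    (θstar : D) (hθstar : ∀ θ : D, p θstar ≤ p θ) :
    (∀ (x : D) (a : D → Bool), ExpWin x a p q ≤ 1 - p θstar) ∧
    ExpWin θstar (fun _ => true) p q = 1 - p θstar :=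
  bayes_optimality_of_switching_general p hp q hq θstar hθstar
end

section
/- Let n be the cardinality of D and let p be the uniform prior p θ = 1/n. Then for every door x ∈ D and every transition probabilities q, the always-switching strategy based at x has expected winning probability ExpWin(x, switch, p, q) = (n - 1)/n. -/
open Finset

theorem expWin_switch_eq_sum_ne {D : Type*} [Fintype D] [DecidableEq D]
    (x : D) (p : D → ℝ) (q : D → D → ℝ) :
    ExpWin x (fun _ => true) p q = ∑ θ ∈ univ.filter (· ≠ x), p θ := by
  simp [ExpWin]

theorem expWin_switch_eq_one_sub {D : Type*} [Fintype D] [DecidableEq D]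
    (x : D) {p : D → ℝ} (hp : ∑ θ, p θ = 1) (q : D → D → ℝ) :
    ExpWin x (fun _ => true) p q = 1 - p x := by
  rw [expWin_switch_eq_sum_ne, filter_ne', sum_erase_eq_sub (mem_univ x), hp]

theorem sum_uniform_eq_one {D : Type*} [Fintype D] [Nonempty D] :
    ∑ _θ : D, 1 / (Fintype.card D : ℝ) = 1 := by
  rw [sum_const, card_univ, nsmul_eq_mul, mul_one_div_cancel (by positivity)]

theorem expWin_switch_uniform_general {D : Type*} [Fintype D] [DecidableEq D]
    (q : D → D → ℝ) (x : D) :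
    ExpWin x (fun _ => true) (fun _ => 1 / (Fintype.card D : ℝ)) q =
      ((Fintype.card D : ℝ) - 1) / (Fintype.card D : ℝ) := by
  have : Nonempty D := ⟨x⟩
  rw [expWin_switch_eq_one_sub x sum_uniform_eq_one, sub_div, div_self (by positivity)]

/-- Under the uniform prior, every always-switching strategy
has winning probability `(n-1)/n`, for every transition probabilities `q`. -/
theorem expWin_switch_uniform {D : Type*} [Fintype D] [DecidableEq D]
    (hD : 3 ≤ Fintype.card D) (q : D → D → ℝ) (hq : IsTransKernel q) (x : D) :
    ExpWin x (fun _ => true) (fun _ => 1 / (Fintype.card D : ℝ)) q =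
      ((Fintype.card D : ℝ) - 1) / (Fintype.card D : ℝ) :=
  expWin_switch_uniform_general q x
end

section
/- Let n be the cardinality of D and let p be the uniform prior p θ = 1/n. Then for every strategy (x, a) and every transition probabilities q, the expected winning probability satisfies ExpWin(x, a, p, q) ≤ (n - 1)/n. Hence the uniform prior guarantees the environment a losing probability for the player of at least 1/n against any strategy. -/
open Finset

/-! Under the uniform prior `1/n` the winning probability is `1/n` times a sum over the `n - 1`
doors `y ≠ x`: door `y` contributes `q x y` if the player matches there and `1` if he switches.
Each contribution is at most `1`, so the sum is at most `n - 1`. -/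

lemma IsTransKernel.le_one {D : Type*} [Fintype D] {q : D → D → ℝ} (hq : IsTransKernel q)
    (θ y : D) : q θ y ≤ 1 :=
  hq.2.2 θ ▸ single_le_sum (fun z _ => hq.1 θ z) (mem_univ y)

lemma mul_ite_false_add_ite_true_le_one {r : ℝ} (hr : r ≤ 1) (b : Bool) :
    r * (if b = false then 1 else 0) + (if b = true then 1 else 0) ≤ 1 := by
  cases b <;> simp [hr]

lemma card_filter_ne {D : Type*} [Fintype D] [DecidableEq D] (x : D) :
    #(univ.filter (· ≠ x)) = Fintype.card D - 1 := by
  rw [filter_ne', card_erase_of_mem (mem_univ x), card_univ]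

lemma expWin_const_prior {D : Type*} [Fintype D] [DecidableEq D]
    (x : D) (a : D → Bool) (c : ℝ) (q : D → D → ℝ) :
    ExpWin x a (fun _ => c) q = c * ∑ y ∈ univ.filter (· ≠ x),
      (q x y * (if a y = false then 1 else 0) + (if a y = true then 1 else 0)) := by
  rw [ExpWin, sum_add_distrib, mul_add, ← mul_sum]

lemma expWin_const_prior_le {D : Type*} [Fintype D] [DecidableEq D]
    {q : D → D → ℝ} (hq : IsTransKernel q) (x : D) (a : D → Bool) {c : ℝ} (hc : 0 ≤ c) :
    ExpWin x a (fun _ => c) q ≤ c * ((Fintype.card D : ℝ) - 1) := by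
  have hcard : ((Fintype.card D - 1 : ℕ) : ℝ) = (Fintype.card D : ℝ) - 1 :=
    Nat.cast_pred (Fintype.card_pos_iff.2 ⟨x⟩)
  rw [expWin_const_prior, ← hcard, ← card_filter_ne x]
  gcongr
  simpa using sum_le_card_nsmul _ _ 1 fun y _ =>
    mul_ite_false_add_ite_true_le_one (hq.le_one x y) (a y)

theorem uniform_prior_guarantee_general {D : Type*} [Fintype D] [DecidableEq D]
    (q : D → D → ℝ) (hq : IsTransKernel q)
    (x : D) (a : D → Bool) :
    ExpWin x a (fun _ => 1 / (Fintype.card D : ℝ)) q ≤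
      ((Fintype.card D : ℝ) - 1) / (Fintype.card D : ℝ) := by
  calc ExpWin x a (fun _ => 1 / (Fintype.card D : ℝ)) q
      ≤ 1 / (Fintype.card D : ℝ) * ((Fintype.card D : ℝ) - 1) :=
        expWin_const_prior_le hq x a (by positivity)
    _ = ((Fintype.card D : ℝ) - 1) / (Fintype.card D : ℝ) := by rw [one_div_mul_eq_div]

/-- Under the uniform prior, every strategy `(x, a)` has winning
probability at most `(n-1)/n`, for every transition probabilities `q`. -/
theorem uniform_prior_guarantee {D : Type*} [Fintype D] [DecidableEq D]
    (hD : 3 ≤ Fintype.card D) (q : D → D → ℝ) (hq : IsTransKernel q)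
    (x : D) (a : D → Bool) :
    ExpWin x a (fun _ => 1 / (Fintype.card D : ℝ)) q ≤
      ((Fintype.card D : ℝ) - 1) / (Fintype.card D : ℝ) :=
  uniform_prior_guarantee_general q hq x a
end
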